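/- Let a ∈ ℂ, R > 0, and let Ω ⊆ B(a,R) be a nonempty connected open subset of ℂ. Let K ⊆ ∂Ω be a nonempty compact set whose diameter δ satisfies 0 < δ ≤ R/2. Let x ∈ Ω and let h : Ω → ℝ be a continuous subharmonic function with h ≤ 1 on Ω and such that limsup_{z→ζ, z∈Ω} h(z) ≤ 0 for every ζ ∈ ∂Ω \ K. Then h(x) ≤ log(2R / dist(x,K)) / log(R/δ). -/

import Mathlib

/-!
Let `k ∈ K` be a point nearest to `x` and `δ = diam K`. The barrier
`u z = (log (2R) - log ‖z - k‖) / log (R / δ)` is harmonic off `k`, nonnegative on `Ω ⊆ B(a, R)`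
(where `‖z - k‖ ≤ 2R`) and at least `1` within distance `δ` of `k`, hence near every point of `K`.
So `h - u` has the sub-mean-value property (harmonic functions have the mean value property on
discs, by integrating their circle averages in polar coordinates), and its boundary values are
`≤ 0`. The maximum principle gives `h ≤ u` on `Ω`, which at `x` is the estimate.
-/

open MeasureTheory Metric Set Filter Topology Real InnerProductSpace

section PolarCoordinates

variable {E : Type*} [NormedAddCommGroup E] [NormedSpace ℝ E]

theorem integral_Ioo_neg_pi_pi_circleMap (f : ℂ → E) (c : ℂ) (s : ℝ) :
    ∫ θ in Ioo (-π) π, f (circleMap c s θ) = (2 * π) • circleAverage f c s := by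
  have hper : Function.Periodic (fun θ => f (circleMap c s θ)) (2 * π) := fun θ => by
    simp [periodic_circleMap c s θ]
  rw [circleAverage_def, smul_inv_smul₀ (by positivity), ← integral_Ioc_eq_integral_Ioo,
    ← intervalIntegral.integral_of_le (by linarith [pi_pos])]
  simpa [two_mul] using hper.intervalIntegral_add_eq (-π) 0

theorem integral_closedBall_eq_integral_circleAverage {f : ℂ → E} {c : ℂ} {r : ℝ} (hr : 0 ≤ r)
    (hf : ContinuousOn f (closedBall c r)) :
    ∫ w in closedBall c r, f w = ∫ s in (0)..r, (2 * π * s) • circleAverage f c s := by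
  set F : ℝ × ℝ → E := fun p => p.1 • f (circleMap c p.1 p.2)
  have hpolar : ∀ p ∈ Complex.polarCoord.target,
      p.1 • (closedBall 0 r).indicator (fun z => f (c + z)) (Complex.polarCoord.symm p) =
        (Iic r ×ˢ univ).indicator F p := by
    rintro ⟨s, θ⟩ ⟨hs, -⟩
    have hcirc : c + Complex.polarCoord.symm (s, θ) = circleMap c s θ := by
      simp [circleMap, Complex.exp_mul_I, ← Complex.ofReal_cos, ← Complex.ofReal_sin]
    by_cases hsr : s ≤ r
    · have hmem : Complex.polarCoord.symm (s, θ) ∈ closedBall 0 r := by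
        simpa [abs_of_pos (mem_Ioi.1 hs)] using hsr
      rw [indicator_of_mem hmem, hcirc, indicator_of_mem (by simpa using hsr)]
    · have hmem : Complex.polarCoord.symm (s, θ) ∉ closedBall 0 r := by
        simpa [abs_of_pos (mem_Ioi.1 hs)] using hsr
      rw [indicator_of_notMem hmem, indicator_of_notMem (by simpa using hsr), smul_zero]
  have hdomain : Complex.polarCoord.target ∩ Iic r ×ˢ univ = Ioc 0 r ×ˢ Ioo (-π) π := by
    rw [Complex.polarCoord_target, prod_inter_prod, Ioi_inter_Iic, inter_univ]
  have hF : IntegrableOn F (Ioc 0 r ×ˢ Ioo (-π) π) := by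
    refine ContinuousOn.integrableOn_compact (isCompact_Icc.prod isCompact_Icc) ?_
      |>.mono_set (prod_mono Ioc_subset_Icc_self Ioo_subset_Icc_self)
    refine continuousOn_fst.smul (hf.comp (by fun_prop) fun p hp => ?_)
    exact closedBall_subset_closedBall hp.1.2 (circleMap_mem_closedBall c hp.1.1 p.2)
  calc ∫ w in closedBall c r, f w
      = ∫ z in closedBall 0 r, f (c + z) := by
        rw [← (measurePreserving_add_left volume c).setIntegral_preimage_emb
          (measurableEmbedding_addLeft c), preimage_add_closedBall, sub_self]
    _ = ∫ p in Complex.polarCoord.target, (Iic r ×ˢ univ).indicator F p := by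
        rw [← integral_indicator measurableSet_closedBall,
          ← Complex.integral_comp_polarCoord_symm]
        exact setIntegral_congr_fun Complex.polarCoord.open_target.measurableSet hpolar
    _ = ∫ s in Ioc 0 r, ∫ θ in Ioo (-π) π, s • f (circleMap c s θ) := by
        rw [setIntegral_indicator (measurableSet_Iic.prod MeasurableSet.univ), hdomain]
        exact setIntegral_prod F hF
    _ = ∫ s in (0)..r, (2 * π * s) • circleAverage f c s := by
        rw [intervalIntegral.integral_of_le hr]
        refine setIntegral_congr_fun measurableSet_Ioc fun s _ => ?_
        rw [integral_smul, integral_Ioo_neg_pi_pi_circleMap, smul_smul, mul_comm]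

theorem InnerProductSpace.HarmonicOnNhd.setAverage_closedBall_eq [CompleteSpace E] {f : ℂ → E}
    {c : ℂ} {r : ℝ} (hf : HarmonicOnNhd f (closedBall c r)) (hr : 0 < r) :
    ⨍ w in closedBall c r, f w = f c := by
  have hcircle : ∀ s ∈ uIcc 0 r, (2 * π * s) • circleAverage f c s = (2 * π * s) • f c := by
    intro s hs
    rw [uIcc_of_le hr.le] at hs
    have hsr : |s| ≤ r := by rw [abs_of_nonneg hs.1]; exact hs.2
    rw [(hf.mono (closedBall_subset_closedBall hsr)).circleAverage_eq]
  have hvol : volume.real (closedBall c r) = π * r ^ 2 := by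
    simp [measureReal_def, ENNReal.toReal_ofReal hr.le, mul_comm]
  rw [setAverage_eq, integral_closedBall_eq_integral_circleAverage hr.le hf.continuousOn,
    intervalIntegral.integral_congr hcircle, intervalIntegral.integral_smul_const,
    intervalIntegral.integral_const_mul, integral_id, hvol, smul_smul]
  convert one_smul ℝ (f c) using 2
  field_simp
  ring

end PolarCoordinates

theorem ae_eq_const_of_le_of_le_setAverage {α : Type*} [MeasurableSpace α] {μ : Measure α}
    {s : Set α} {f : α → ℝ} {M : ℝ} (hμ : μ s ≠ 0) (hμ' : μ s ≠ ⊤) (hf : IntegrableOn f s μ)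
    (hle : ∀ᵐ x ∂μ.restrict s, f x ≤ M) (hM : M ≤ ⨍ x in s, f x ∂μ) :
    f =ᵐ[μ.restrict s] fun _ => M := by
  have hpos : 0 < μ.real s := ENNReal.toReal_pos hμ hμ'
  have hgap : IntegrableOn (fun x => M - f x) s μ := (integrableOn_const hμ').sub hf
  have hnonneg : 0 ≤ᵐ[μ.restrict s] fun x => M - f x := hle.mono fun x hx => sub_nonneg.2 hx
  have hint : ∫ x in s, (M - f x) ∂μ = 0 := by
    refine le_antisymm ?_ (integral_nonneg_of_ae hnonneg)
    rw [integral_sub (integrableOn_const (C := M) hμ') hf, setIntegral_const, smul_eq_mul]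
    rw [setAverage_eq, smul_eq_mul, le_inv_mul_iff₀ hpos] at hM
    linarith
  filter_upwards [(integral_eq_zero_iff_of_nonneg_ae hnonneg hgap).1 hint] with x hx
  exact (sub_eq_zero.1 hx).symm

section MaximumPrinciple

variable {X : Type*} [MetricSpace X]

theorem ContinuousOn.exists_isMaxOn_of_eventually_lt_frontier [ProperSpace X] {v : X → ℝ}
    {Ω : Set X} (hc : ContinuousOn v Ω) (hbdd : Bornology.IsBounded Ω) {x : X} (hx : x ∈ Ω)
    (hfr : ∀ ζ ∈ frontier Ω, ∀ᶠ z in 𝓝[Ω] ζ, v z < v x) : ∃ z ∈ Ω, IsMaxOn v Ω z := by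
  set A := {z | z ∈ Ω ∧ v x ≤ v z}
  have hAΩ : A ⊆ Ω := fun z hz => hz.1
  have hclosure : closure A ⊆ Ω := by
    intro t ht
    by_contra htΩ
    have htfr : t ∈ frontier Ω := ⟨closure_mono hAΩ ht, fun h => htΩ (interior_subset h)⟩
    have := mem_closure_iff_nhdsWithin_neBot.1 ht
    obtain ⟨z, hzlt, hzA⟩ :=
      (((hfr t htfr).filter_mono (nhdsWithin_mono t hAΩ)).and self_mem_nhdsWithin).exists
    exact (hzA.2.trans_lt hzlt).false
  obtain ⟨z, hzA, hzmax⟩ := (hbdd.subset hAΩ).isCompact_closure.exists_isMaxOn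
    ⟨x, subset_closure ⟨hx, le_rfl⟩⟩ (hc.mono hclosure)
  refine ⟨z, hclosure hzA, fun w hw => ?_⟩
  rcases le_or_gt (v x) (v w) with h | h
  · exact hzmax (subset_closure ⟨hw, h⟩)
  · exact h.le.trans (hzmax (subset_closure ⟨hx, le_rfl⟩))

variable [MeasurableSpace X]

def SubMeanValueOn (μ : Measure X) (v : X → ℝ) (Ω : Set X) : Prop :=
  ∀ (z : X) (r : ℝ), 0 < r → closedBall z r ⊆ Ω → v z ≤ ⨍ w in closedBall z r, v w ∂μ

namespace SubMeanValueOn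

variable [ProperSpace X] [OpensMeasurableSpace X] {μ : Measure X} [IsFiniteMeasureOnCompacts μ]
  [μ.IsOpenPosMeasure] {v : X → ℝ} {Ω : Set X}

theorem eqOn_ball_of_isMaxOn (hv : SubMeanValueOn μ v Ω) (hc : ContinuousOn v Ω) {z : X} {r : ℝ}
    (hr : 0 < r) (hball : closedBall z r ⊆ Ω) (hmax : IsMaxOn v Ω z) :
    EqOn v (fun _ => v z) (ball z r) := by
  have hae := ae_eq_const_of_le_of_le_setAverage (measure_closedBall_pos μ z hr).ne'
    measure_closedBall_lt_top.ne ((hc.mono hball).integrableOn_compact (isCompact_closedBall z r))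
    ((ae_restrict_iff' measurableSet_closedBall).2 (.of_forall fun w hw => hmax (hball hw)))
    (hv z r hr hball)
  exact Measure.eqOn_open_of_ae_eq (ae_restrict_of_ae_restrict_of_subset ball_subset_closedBall hae)
    isOpen_ball (hc.mono (ball_subset_closedBall.trans hball)) continuousOn_const

theorem eqOn_of_isMaxOn (hv : SubMeanValueOn μ v Ω) (hΩ : IsOpen Ω) (hconn : IsPreconnected Ω)
    (hc : ContinuousOn v Ω) {z : X} (hz : z ∈ Ω) (hmax : IsMaxOn v Ω z) :
    EqOn v (fun _ => v z) Ω := by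
  have hmaxSet : IsOpen {w | w ∈ Ω ∧ v w = v z} := by
    refine isOpen_iff_mem_nhds.2 fun w ⟨hw, hwz⟩ => ?_
    obtain ⟨r, hr, hball⟩ := nhds_basis_closedBall.mem_iff.1 (hΩ.mem_nhds hw)
    have hmax' : IsMaxOn v Ω w := fun y hy => hwz ▸ hmax hy
    refine mem_of_superset (ball_mem_nhds w hr) fun y hy => ⟨hball (ball_subset_closedBall hy), ?_⟩
    rw [eqOn_ball_of_isMaxOn hv hc hr hball hmax' hy, hwz]
  have hbelow : IsOpen (Ω ∩ v ⁻¹' Iio (v z)) := hc.isOpen_inter_preimage hΩ isOpen_Iio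
  have hcover : Ω ⊆ {w | w ∈ Ω ∧ v w = v z} ∪ Ω ∩ v ⁻¹' Iio (v z) := fun w hw =>
    (hmax hw).eq_or_lt.imp (fun h => ⟨hw, h⟩) fun h => ⟨hw, h⟩
  have hdisj : Disjoint {w | w ∈ Ω ∧ v w = v z} (Ω ∩ v ⁻¹' Iio (v z)) :=
    disjoint_left.2 fun w ⟨_, hw⟩ ⟨_, hw'⟩ => (hw ▸ hw' : v z < v z).false
  exact fun w hw => (hconn.subset_left_of_subset_union hmaxSet hbelow hdisj hcover
    ⟨z, hz, hz, rfl⟩ hw).2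

-- The boundary condition `limsup v ≤ 0` in ε-form: `Filter.limsup` of a real function that is
-- unbounded above near `ζ` is the junk value `0`.
theorem nonpos_of_eventually_lt_frontier (hv : SubMeanValueOn μ v Ω) (hΩ : IsOpen Ω)
    (hconn : IsPreconnected Ω) (hbdd : Bornology.IsBounded Ω) (hfr : (frontier Ω).Nonempty)
    (hc : ContinuousOn v Ω) (hbd : ∀ ζ ∈ frontier Ω, ∀ ε > 0, ∀ᶠ z in 𝓝[Ω] ζ, v z < ε) :
    ∀ x ∈ Ω, v x ≤ 0 := by
  by_contra! ⟨x, hx, hpos⟩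
  obtain ⟨z, hz, hmax⟩ := hc.exists_isMaxOn_of_eventually_lt_frontier hbdd hx
    fun ζ hζ => hbd ζ hζ (v x) hpos
  have hconst := hv.eqOn_of_isMaxOn hΩ hconn hc hz hmax
  obtain ⟨ζ, hζ⟩ := hfr
  have := mem_closure_iff_nhdsWithin_neBot.1 (frontier_subset_closure hζ)
  obtain ⟨w, hwlt, hw⟩ := ((hbd ζ hζ (v x) hpos).and self_mem_nhdsWithin).exists
  exact ((hmax hx).trans_lt (hconst hw ▸ hwlt)).false

end SubMeanValueOn

end MaximumPrinciple

theorem SubMeanValueOn.sub_harmonicOnNhd {Ω : Set ℂ} {h u : ℂ → ℝ}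
    (hh : SubMeanValueOn volume h Ω) (hc : ContinuousOn h Ω) (hu : HarmonicOnNhd u Ω) :
    SubMeanValueOn volume (h - u) Ω := by
  intro z r hr hball
  have hint : ∀ f : ℂ → ℝ, ContinuousOn f Ω → IntegrableOn f (closedBall z r) := fun f hf =>
    (hf.mono hball).integrableOn_compact (isCompact_closedBall z r)
  rw [setAverage_eq, Pi.sub_def, integral_sub (hint h hc) (hint u hu.continuousOn), smul_sub,
    ← setAverage_eq, ← setAverage_eq, (hu.mono hball).setAverage_closedBall_eq hr]
  exact sub_le_sub_right (hh z r hr hball) _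

noncomputable def logBarrier (k : ℂ) (ρ L : ℝ) (z : ℂ) : ℝ := (log ρ - log ‖z - k‖) / L

theorem harmonicOnNhd_logBarrier (k : ℂ) (ρ L : ℝ) : HarmonicOnNhd (logBarrier k ρ L) {k}ᶜ := by
  intro z hz
  have hlog : HarmonicAt (fun w => log ‖w - k‖) z :=
    (analyticAt_id.sub analyticAt_const).harmonicAt_log_norm (sub_ne_zero.2 hz)
  have : logBarrier k ρ L = L⁻¹ • ((fun _ => log ρ) - fun w => log ‖w - k‖) := by
    ext w; simp [logBarrier, div_eq_inv_mul]
  rw [this]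
  exact ((harmonicAt_const _).sub hlog).const_smul

theorem div_le_logBarrier {k z : ℂ} {ρ L t : ℝ} (hL : 0 < L) (hz : z ≠ k) (ht : ‖z - k‖ ≤ t) :
    (log ρ - log t) / L ≤ logBarrier k ρ L z := by
  have := log_le_log (norm_pos_iff.2 (sub_ne_zero.2 hz)) ht
  unfold logBarrier
  gcongr

theorem eventually_lt_logBarrier {k ζ : ℂ} {ρ L t c : ℝ} (hL : 0 < L) (ht : 0 < t)
    (hζ : dist ζ k ≤ t) (hc : c < (log ρ - log t) / L) :
    ∀ᶠ z in 𝓝[{k}ᶜ] ζ, c < logBarrier k ρ L z := by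
  rcases eq_or_ne ζ k with rfl | hζk
  · filter_upwards [inter_mem_nhdsWithin _ (ball_mem_nhds ζ ht)] with z ⟨hz, hzt⟩
    exact hc.trans_le (div_le_logBarrier hL hz (mem_ball_iff_norm.1 hzt).le)
  · have hcont := ((harmonicOnNhd_logBarrier k ρ L) ζ hζk).1.continuousAt
    exact nhdsWithin_le_nhds <| hcont.eventually <|
      lt_mem_nhds (hc.trans_le (div_le_logBarrier hL hζk (dist_eq_norm ζ k ▸ hζ)))

theorem le_logBarrier_of_subMeanValueOn {Ω K : Set ℂ} {k : ℂ} {ρ L : ℝ} {h : ℂ → ℝ}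
    (hΩ : IsOpen Ω) (hconn : IsPreconnected Ω) (hbdd : Bornology.IsBounded Ω)
    (hK : Bornology.IsBounded K) (hKfr : K ⊆ frontier Ω) (hk : k ∈ K) (hδ : 0 < diam K)
    (hL : 0 < L) (hLδ : L ≤ log ρ - log (diam K)) (hρ : ∀ z ∈ Ω, ‖z - k‖ ≤ ρ)
    (hsub : SubMeanValueOn volume h Ω) (hc : ContinuousOn h Ω) (hbound : ∀ z ∈ Ω, h z ≤ 1)
    (hlimsup : ∀ ζ ∈ frontier Ω \ K, limsup h (𝓝[Ω] ζ) ≤ 0) :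
    ∀ z ∈ Ω, h z ≤ logBarrier k ρ L z := by
  have hΩk : Ω ⊆ {k}ᶜ := fun z hz hzk => (hΩ.frontier_eq ▸ hKfr hk).2 (hzk ▸ hz)
  have hu : HarmonicOnNhd (logBarrier k ρ L) Ω := (harmonicOnNhd_logBarrier k ρ L).mono hΩk
  have hu_nonneg : ∀ z ∈ Ω, 0 ≤ logBarrier k ρ L z := fun z hz => by
    simpa using div_le_logBarrier (ρ := ρ) hL (hΩk hz) (hρ z hz)
  have hu_near_K : 1 ≤ (log ρ - log (diam K)) / L := (one_le_div hL).2 hLδ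
  have hv : ∀ z ∈ Ω, (h - logBarrier k ρ L) z ≤ 0 := by
    refine (hsub.sub_harmonicOnNhd hc hu).nonpos_of_eventually_lt_frontier hΩ hconn hbdd
      ⟨k, hKfr hk⟩ (hc.sub hu.continuousOn) fun ζ hζ ε hε => ?_
    by_cases hζK : ζ ∈ K
    · have hlt : 1 - ε < (log ρ - log (diam K)) / L := by linarith
      filter_upwards [eventually_nhdsWithin_of_forall hbound,
        (eventually_lt_logBarrier hL hδ (dist_le_diam_of_mem hK hζK hk) hlt).filter_mono
          (nhdsWithin_mono ζ hΩk)] with z h1 h2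
      simp only [Pi.sub_apply]
      linarith
    · filter_upwards [eventually_lt_of_limsup_lt ((hlimsup ζ ⟨hζ, hζK⟩).trans_lt hε)
        ⟨1, eventually_map.2 (eventually_nhdsWithin_of_forall hbound)⟩, self_mem_nhdsWithin]
        with z h1 h2
      simp only [Pi.sub_apply]
      linarith [hu_nonneg z h2]
  exact fun z hz => sub_nonpos.1 (hv z hz)

/-- Beurling-type estimate for harmonic measure, stated through subharmonic competitors:
if `Ω ⊆ B(a,R)` is a nonempty connected open set in `ℂ`, `K ⊆ ∂Ω` is a nonempty compact set
of diameter `δ` with `0 < δ ≤ R/2`, and `h` is a continuous subharmonic function on `Ω`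
(sub-mean-value property on closed balls), bounded by `1`, whose limsup at every boundary
point off `K` is `≤ 0`, then `h(x) ≤ log(2R/dist(x,K)) / log(R/δ)` for every `x ∈ Ω`. -/
theorem harmonic_measure_log_estimate
    (a : ℂ) (R : ℝ) (hR : 0 < R)
    (Ω : Set ℂ) (hΩopen : IsOpen Ω) (hΩconn : IsConnected Ω) (hΩsub : Ω ⊆ Metric.ball a R)
    (K : Set ℂ) (hKcpt : IsCompact K) (hKne : K.Nonempty) (hKsub : K ⊆ frontier Ω)
    (hδpos : 0 < Metric.diam K) (hδle : Metric.diam K ≤ R / 2)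
    (x : ℂ) (hx : x ∈ Ω)
    (h : ℂ → ℝ) (hcont : ContinuousOn h Ω)
    (hsubmean : ∀ (z : ℂ) (r : ℝ), 0 < r → Metric.closedBall z r ⊆ Ω →
      h z ≤ ⨍ w in Metric.closedBall z r, h w)
    (hbound : ∀ z ∈ Ω, h z ≤ 1)
    (hlimsup : ∀ ζ ∈ frontier Ω \ K, Filter.limsup h (nhdsWithin ζ Ω) ≤ 0) :
    h x ≤ Real.log (2 * R / Metric.infDist x K) / Real.log (R / Metric.diam K) := by
  obtain ⟨k, hkK, hxk⟩ := hKcpt.exists_infDist_eq_dist hKne x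
  have hk : k ∈ closedBall a R :=
    closure_ball_subset_closedBall (closure_mono hΩsub (frontier_subset_closure (hKsub hkK)))
  have hdist : ∀ z ∈ Ω, ‖z - k‖ ≤ 2 * R := fun z hz => by
    rw [← dist_eq_norm]
    linarith [dist_triangle_right z k a, mem_ball.1 (hΩsub hz), mem_closedBall.1 hk]
  have hL : 0 < log (R / diam K) := log_pos (by rw [lt_div_iff₀ hδpos]; linarith)
  have hLδ : log (R / diam K) ≤ log (2 * R) - log (diam K) := by
    rw [← log_div (by positivity) hδpos.ne']
    exact log_le_log (by positivity) (by gcongr; linarith)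
  have hxk_ne : x ≠ k := fun hxk' => (hΩopen.frontier_eq ▸ hKsub hkK).2 (hxk' ▸ hx)
  have hle := le_logBarrier_of_subMeanValueOn hΩopen hΩconn.isPreconnected
    (isBounded_ball.subset hΩsub) hKcpt.isBounded hKsub hkK hδpos hL hLδ hdist hsubmean hcont
    hbound hlimsup x hx
  rwa [hxk, dist_eq_norm, log_div (by positivity) (norm_ne_zero_iff.2 (sub_ne_zero.2 hxk_ne))]
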